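/- Let u ∈ C̃²(T³) solve the reduced Calabi–Yau equation (u_xx + 1)(u_yy + u_tt + u_t + 1) − u_xy² − u_xt² = e^F with F continuous and 1-periodic. Then at every point of ℝ³, 0 < 2 e^{F/2} ≤ Δu + u_t + 2, where Δu = u_xx + u_yy + u_tt. -/

import Mathlib

open MeasureTheory

noncomputable section

/-- Points of `ℝ³`, written as `ℝ × ℝ × ℝ`. -/
abbrev R3 := ℝ × ℝ × ℝ

/-- The coordinate direction `x`. -/
def vx : R3 := (1, 0, 0)
/-- The coordinate direction `y`. -/
def vy : R3 := (0, 1, 0)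
/-- The coordinate direction `t`. -/
def vt : R3 := (0, 0, 1)

/-- Partial (directional) derivative in the direction `e`. -/
def pd (e : R3) (u : R3 → ℝ) : R3 → ℝ := fun p => fderiv ℝ u p e

/-- `1`-periodicity in each of the three variables. -/
def Periodic3 (u : R3 → ℝ) : Prop :=
  ∀ p : R3, u (p + vx) = u p ∧ u (p + vy) = u p ∧ u (p + vt) = u p

/-- The unit cube `[0,1]³`. -/
def cube : Set R3 := Set.Icc (0, 0, 0) (1, 1, 1)

/-- Zero mean over the unit cube. -/
def ZeroMean (u : R3 → ℝ) : Prop := ∫ p in cube, u p = 0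

/-- The reduced Calabi–Yau equation
`(u_xx + 1)(u_yy + u_tt + u_t + 1) − u_xy² − u_xt² = e^F` on `ℝ³`. -/
def CYeq (F u : R3 → ℝ) : Prop :=
  ∀ p : R3,
    (pd vx (pd vx u) p + 1)
        * (pd vy (pd vy u) p + pd vt (pd vt u) p + pd vt u p + 1)
      - (pd vy (pd vx u) p) ^ 2 - (pd vt (pd vx u) p) ^ 2 = Real.exp (F p)

/-- The Euclidean norm on `ℝ³ = ℝ × ℝ × ℝ`. -/
def enorm3 (h : R3) : ℝ := Real.sqrt (h.1 ^ 2 + h.2.1 ^ 2 + h.2.2 ^ 2)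

/-!
Write `A = u_xx + 1` and `B = u_yy + u_tt + u_t + 1`. The equation gives `A B ≥ e^F > 0`, so the
continuous function `A` never vanishes on the connected space `ℝ³`. Since `u_x` is `1`-periodic in
`x`, Rolle's theorem yields a point where `u_xx = 0`, i.e. `A = 1`; hence `A > 0` everywhere, and
AM–GM gives `2 e^{F/2} = 2 √(e^F) ≤ 2 √(A B) ≤ A + B = Δu + u_t + 2`.
-/

theorem two_mul_sqrt_le_add_of_le_mul {a b c : ℝ} (ha : 0 < a) (hc : 0 ≤ c) (h : c ≤ a * b) :
    2 * √c ≤ a + b := by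
  have hb : 0 ≤ b := nonneg_of_mul_nonneg_right (hc.trans h) ha
  nlinarith [Real.sq_sqrt hc, Real.sqrt_nonneg c, sq_nonneg (a - b)]

theorem lt_of_forall_ne_of_lt {X α : Type*} [TopologicalSpace X] [PreconnectedSpace X]
    [LinearOrder α] [TopologicalSpace α] [OrderClosedTopology α] {g : X → α} (hg : Continuous g)
    {c : α} (hne : ∀ x, g x ≠ c) {q : X} (hq : c < g q) (x : X) : c < g x := by
  by_contra! hx
  obtain ⟨y, hy⟩ := intermediate_value_univ x q hg ⟨hx, hq.le⟩
  exact hne y hy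

section Periodic

variable {E : Type*} [NormedAddCommGroup E] [NormedSpace ℝ E]

theorem fderiv_add_eq_of_periodic {F : Type*} [NormedAddCommGroup F] [NormedSpace ℝ F]
    {f : E → F} {v : E} (h : ∀ p, f (p + v) = f p) (p : E) :
    fderiv ℝ f (p + v) = fderiv ℝ f p := by
  rw [← fderiv_comp_add_right]
  simp only [h]

theorem exists_fderiv_apply_eq_zero_of_periodic {f : E → ℝ} (hf : Differentiable ℝ f) {v : E}
    (h : ∀ p, f (p + v) = f p) : ∃ q, fderiv ℝ f q v = 0 := by
  have hline : ∀ s : ℝ, HasDerivAt (fun s : ℝ => f (s • v)) (fderiv ℝ f (s • v) v) s := by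
    intro s
    have hsmul : HasDerivAt (fun s : ℝ => s • v) v s := by
      simpa using (hasDerivAt_id s).smul_const v
    exact (hf _).hasFDerivAt.comp_hasDerivAt s hsmul
  have hends : f ((0 : ℝ) • v) = f ((1 : ℝ) • v) := by simpa using (h 0).symm
  obtain ⟨s, -, hs⟩ := exists_hasDerivAt_eq_zero zero_lt_one
    (hf.continuous.comp (continuous_id.smul continuous_const)).continuousOn hends
    (fun s _ => hline s)
  exact ⟨s • v, hs⟩

end Periodic

theorem ContDiff.pd {u : R3 → ℝ} {m n : WithTop ℕ∞} (hu : ContDiff ℝ n u) (hmn : m + 1 ≤ n)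
    (e : R3) : ContDiff ℝ m (pd e u) :=
  (ContinuousLinearMap.apply ℝ ℝ e).contDiff.comp (hu.fderiv_right hmn)

namespace CYeq

variable {F u : R3 → ℝ}

theorem exp_le_mul (hsol : CYeq F u) (p : R3) :
    Real.exp (F p) ≤ (pd vx (pd vx u) p + 1)
      * (pd vy (pd vy u) p + pd vt (pd vt u) p + pd vt u p + 1) := by
  nlinarith [hsol p, sq_nonneg (pd vy (pd vx u) p), sq_nonneg (pd vt (pd vx u) p)]

theorem pd_vx_pd_vx_add_one_pos (hsol : CYeq F u) (hu : ContDiff ℝ 2 u) (huper : Periodic3 u)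
    (p : R3) : 0 < pd vx (pd vx u) p + 1 := by
  have hux : ContDiff ℝ 1 (pd vx u) := hu.pd (by norm_num) vx
  have huxx : Continuous (pd vx (pd vx u)) := (hux.pd (m := 0) (by norm_num) vx).continuous
  have hne : ∀ q, pd vx (pd vx u) q + 1 ≠ 0 := by
    intro q hq
    have := hsol.exp_le_mul q
    rw [hq, zero_mul] at this
    exact (Real.exp_pos _).not_ge this
  have hux_per : ∀ q, pd vx u (q + vx) = pd vx u q := fun q => by
    simp only [pd, fderiv_add_eq_of_periodic (fun r => (huper r).1) q]
  obtain ⟨q, hq⟩ := exists_fderiv_apply_eq_zero_of_periodic (hux.differentiable one_ne_zero) hux_per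
  refine lt_of_forall_ne_of_lt (huxx.add continuous_const) hne (q := q) ?_ p
  simp [pd, hq]

end CYeq

theorem stmt1_general (F u : R3 → ℝ)
    (hu : ContDiff ℝ 2 u) (huper : Periodic3 u)
    (hsol : CYeq F u) :
    ∀ p : R3, 0 < 2 * Real.exp (F p / 2) ∧
      2 * Real.exp (F p / 2) ≤ pd vx (pd vx u) p + pd vy (pd vy u) p + pd vt (pd vt u) p + pd vt u p + 2 := by
  intro p
  refine ⟨by positivity, ?_⟩
  calc 2 * Real.exp (F p / 2) = 2 * √(Real.exp (F p)) := by rw [Real.exp_half]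
    _ ≤ (pd vx (pd vx u) p + 1) + (pd vy (pd vy u) p + pd vt (pd vt u) p + pd vt u p + 1) :=
      two_mul_sqrt_le_add_of_le_mul (hsol.pd_vx_pd_vx_add_one_pos hu huper p)
        (Real.exp_pos _).le (hsol.exp_le_mul p)
    _ = _ := by ring

/-- For a `C²` `1`-periodic zero-mean solution `u` of the reduced
Calabi–Yau equation, `0 < 2 e^(F/2) ≤ Δu + u_t + 2` everywhere. -/
theorem stmt1 (F u : R3 → ℝ) (hF : Continuous F) (hFper : Periodic3 F)
    (hu : ContDiff ℝ 2 u) (huper : Periodic3 u) (humean : ZeroMean u)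
    (hsol : CYeq F u) :
    ∀ p : R3, 0 < 2 * Real.exp (F p / 2) ∧
      2 * Real.exp (F p / 2) ≤ pd vx (pd vx u) p + pd vy (pd vy u) p + pd vt (pd vt u) p + pd vt u p + 2 :=
  stmt1_general F u hu huper hsol

end
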